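/- arXiv:1906.04709 — 4 statements merged into one kernel-verified Lean document; each statement's English description precedes it below -/
import Mathlib

section
/- Let p be a distribution on [n] with ||p − U_n||_1 ≥ ε, and let H = {i : p_i ≥ 10^4/(ε^2 n)}. If p(H) = Σ_{i∈H} p_i ≤ ε^2/100, then the renormalized restriction p' defined by p'_i = p_i/(1 − p(H)) for i ∉ H and p'_i = 0 for i ∈ H satisfies ||p' − U_n||_1 ≥ ε/3. -/
open Finset
open scoped Classical

/-- If `p` is `ε`-far from uniform on `[n]` and the set `H` of heavy bins
(`pᵢ ≥ 10⁴/(ε² n)`) has total mass at most `ε²/100`, then the renormalized restriction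
`p'` of `p` to the light bins is still `ε/3`-far from uniform. -/
theorem renormalized_light_part_far_from_uniform (n : ℕ) (hn : 0 < n)
    (ε : ℝ) (hε0 : 0 < ε) (hε1 : ε < 1)
    (p : Fin n → ℝ) (hp : ∀ i, 0 ≤ p i) (hp1 : ∑ i, p i = 1)
    (hfar : ∑ i, |p i - 1 / (n : ℝ)| ≥ ε)
    (hH : ∑ i ∈ Finset.univ.filter (fun i => 10 ^ 4 / (ε ^ 2 * n) ≤ p i), p i ≤ ε ^ 2 / 100) :
    ∑ i, |(if 10 ^ 4 / (ε ^ 2 * n) ≤ p i then (0 : ℝ)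
            else p i / (1 - ∑ i ∈ Finset.univ.filter
              (fun i => 10 ^ 4 / (ε ^ 2 * n) ≤ p i), p i)) - 1 / (n : ℝ)|
      ≥ ε / 3 := by
  classical
  set θ : ℝ := 10 ^ 4 / (ε ^ 2 * n) with hθdef
  set m : ℝ := ∑ i ∈ Finset.univ.filter (fun i : Fin n => θ ≤ p i), p i with hmdef
  have hm0 : 0 ≤ m := Finset.sum_nonneg fun i _ => hp i
  have hε2 : ε ^ 2 < 1 := by nlinarith
  have hc : 0 < 1 - m := by nlinarith
  set q : Fin n → ℝ := fun i => if θ ≤ p i then 0 else p i / (1 - m) with hqdef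
  have hcompl : ∑ i ∈ Finset.univ.filter (fun i : Fin n => ¬ θ ≤ p i), p i = 1 - m := by
    have := Finset.sum_filter_add_sum_filter_not Finset.univ (fun i : Fin n => θ ≤ p i) p
    rw [hp1] at this
    linarith [this]
  have hsumdiff : ∑ i, |p i - q i| = 2 * m := by
    rw [← Finset.sum_filter_add_sum_filter_not Finset.univ (fun i : Fin n => θ ≤ p i)]
    have h1 : ∑ i ∈ Finset.univ.filter (fun i : Fin n => θ ≤ p i), |p i - q i| = m := by
      rw [hmdef]
      refine Finset.sum_congr rfl fun i hi => ?_
      simp only [Finset.mem_filter] at hi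
      simp [hqdef, hi.2, abs_of_nonneg (hp i)]
    have h2 : ∑ i ∈ Finset.univ.filter (fun i : Fin n => ¬ θ ≤ p i), |p i - q i| = m := by
      have : ∀ i ∈ Finset.univ.filter (fun i : Fin n => ¬ θ ≤ p i),
          |p i - q i| = p i * (m / (1 - m)) := by
        intro i hi
        simp only [Finset.mem_filter] at hi
        simp only [hqdef, if_neg hi.2]
        rw [abs_of_nonpos]
        · field_simp
          ring
        · have hpi := hp i
          have : p i ≤ p i / (1 - m) := by
            rw [le_div_iff₀ hc]; nlinarith
          linarith
      rw [Finset.sum_congr rfl this, ← Finset.sum_mul, hcompl]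
      field_simp
    rw [h1, h2]; ring
  have htri : ∀ i : Fin n, |p i - 1 / (n : ℝ)| - |p i - q i| ≤ |q i - 1 / (n : ℝ)| := by
    intro i
    have := abs_sub_abs_le_abs_sub (p i - 1 / (n : ℝ)) (p i - q i)
    have heq : (p i - 1 / (n : ℝ)) - (p i - q i) = q i - 1 / (n : ℝ) := by ring
    rw [heq] at this
    linarith
  have hsum : ∑ i, |p i - 1 / (n : ℝ)| - ∑ i, |p i - q i| ≤ ∑ i, |q i - 1 / (n : ℝ)| := by
    rw [← Finset.sum_sub_distrib]
    exact Finset.sum_le_sum fun i _ => htri i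
  have hgoal : ∑ i, |q i - 1 / (n : ℝ)| ≥ ε / 3 := by
    rw [hsumdiff] at hsum
    nlinarith
  exact hgoal
end

section
/- Let h : [n'] → [m] be drawn from a pairwise independent hash family and p a probability distribution on [n']. Then E_h[||h(p)||_2^2] = 1/m + (1 − 1/m)||p||_2^2, where h(p)_i = Σ_{j: h(j)=i} p_j. -/
/-!
Expanding the square, `‖h(p)‖₂² = ∑_{j₁,j₂} p_{j₁} p_{j₂} [h j₁ = h j₂]`, so the expectation is
`∑_{j₁,j₂} p_{j₁} p_{j₂} Pr[h j₁ = h j₂]`. The collision probability is `1` on the diagonal and,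
by pairwise independence, `∑_u Pr[h j₁ = u ∧ h j₂ = u] = m · (1/m)² = 1/m` off it. Hence the
expectation is `‖p‖₂² + (1/m) ((∑ p)² - ‖p‖₂²)`, and `∑ p = 1`.
-/

open Finset

section
variable {α β : Type*} [Fintype α] [Fintype β] [DecidableEq β]

theorem sum_sq_sum_fiber_eq_sum_sum_ite {R : Type*} [CommSemiring R] (h : α → β) (p : α → R) :
    ∑ i, (∑ j ∈ univ.filter (fun j => h j = i), p j) ^ 2
      = ∑ j₁, ∑ j₂, if h j₁ = h j₂ then p j₁ * p j₂ else 0 := by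
  calc ∑ i, (∑ j ∈ univ.filter (fun j => h j = i), p j) ^ 2
      = ∑ i, ∑ j₁ ∈ univ.filter (fun j => h j = i),
          p j₁ * ∑ j₂ ∈ univ.filter (fun j => h j = h j₁), p j₂ := by
        refine sum_congr rfl fun i _ => ?_
        rw [sq, sum_mul]
        refine sum_congr rfl fun j₁ hj₁ => ?_
        rw [(mem_filter.1 hj₁).2]
    _ = ∑ j₁, p j₁ * ∑ j₂ ∈ univ.filter (fun j => h j = h j₁), p j₂ :=
        sum_fiberwise univ h _
    _ = ∑ j₁, ∑ j₂, if h j₁ = h j₂ then p j₁ * p j₂ else 0 := by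
        simp only [mul_sum, sum_filter, mul_ite, mul_zero, eq_comm]

theorem sum_mul_sum_sq_fiber_eq [DecidableEq α] {R : Type*} [CommSemiring R]
    (ν : (α → β) → R) (p : α → R) :
    ∑ h, ν h * ∑ i, (∑ j ∈ univ.filter (fun j => h j = i), p j) ^ 2
      = ∑ j₁, ∑ j₂, p j₁ * p j₂ * ∑ h ∈ univ.filter (fun h : α → β => h j₁ = h j₂), ν h := by
  simp_rw [sum_sq_sum_fiber_eq_sum_sum_ite, mul_sum, sum_filter, mul_ite, mul_zero]
  rw [sum_comm]
  refine sum_congr rfl fun j₁ _ => ?_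
  rw [sum_comm]
  refine sum_congr rfl fun j₂ _ => sum_congr rfl fun h _ => ?_
  split_ifs <;> ring

theorem sum_filter_apply_eq_apply_eq_one_div_card [DecidableEq α] {K : Type*} [Field K]
    (ν : (α → β) → K) (a b : α)
    (hpair : ∀ u : β, ∑ h ∈ univ.filter (fun h : α → β => h a = u ∧ h b = u), ν h
      = (1 / Fintype.card β) ^ 2) :
    ∑ h ∈ univ.filter (fun h : α → β => h a = h b), ν h = 1 / Fintype.card β := by
  rw [← sum_fiberwise _ (fun h : α → β => h a)]
  simp only [filter_filter]
  calc ∑ u, ∑ h ∈ univ.filter (fun h : α → β => h a = h b ∧ h a = u), ν h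
      = ∑ u : β, (1 / Fintype.card β : K) ^ 2 := by
        refine sum_congr rfl fun u _ => ?_
        rw [← hpair u]
        refine sum_congr (filter_congr fun h _ => ?_) fun _ _ => rfl
        constructor
        · rintro ⟨hab, hau⟩; exact ⟨hau, hab ▸ hau⟩
        · rintro ⟨hau, hbu⟩; exact ⟨hau.trans hbu.symm, hau⟩
    _ = 1 / Fintype.card β := by
        rw [sum_const, card_univ, nsmul_eq_mul]
        rcases eq_or_ne (Fintype.card β : K) 0 with h0 | h0
        · simp [h0]
        · field_simp
end

theorem sum_sum_mul_mul_ite_eq {ι R : Type*} [Fintype ι] [DecidableEq ι] [CommRing R]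
    (q : ι → R) (t : R) :
    ∑ j₁, ∑ j₂, q j₁ * q j₂ * (if j₁ = j₂ then 1 else t)
      = t * (∑ j, q j) ^ 2 + (1 - t) * ∑ j, q j ^ 2 := by
  have hsplit : ∀ j₁ j₂ : ι, q j₁ * q j₂ * (if j₁ = j₂ then 1 else t)
      = t * (q j₁ * q j₂) + (1 - t) * (if j₁ = j₂ then q j₁ * q j₂ else 0) := by
    intro j₁ j₂; split_ifs <;> ring
  simp only [hsplit, sum_add_distrib, ← mul_sum, sum_ite_eq, mem_univ, if_true, sq, sum_mul_sum]

theorem expectation_hashed_distribution_sq_norm_general (n' m : ℕ)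
    (ν : (Fin n' → Fin m) → ℝ) (hν1 : ∑ h, ν h = 1)
    (hindep : ∀ (k : ℕ), k ≤ 2 → ∀ (j : Fin k → Fin n'), Function.Injective j →
      ∀ (u : Fin k → Fin m),
        (∑ h, if (∀ i, h (j i) = u i) then ν h else 0) = (1 / (m : ℝ)) ^ k)
    (p : Fin n' → ℝ) (hp1 : ∑ j, p j = 1) :
    ∑ h, ν h * (∑ i : Fin m, (∑ j ∈ Finset.univ.filter (fun j => h j = i), p j) ^ 2)
      = 1 / (m : ℝ) + (1 - 1 / (m : ℝ)) * ∑ j, (p j) ^ 2 := by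
  have hcollision : ∀ j₁ j₂ : Fin n',
      ∑ h ∈ univ.filter (fun h : Fin n' → Fin m => h j₁ = h j₂), ν h
        = if j₁ = j₂ then 1 else 1 / (m : ℝ) := by
    intro j₁ j₂
    split_ifs with hj
    · simpa [hj] using hν1
    · simpa using sum_filter_apply_eq_apply_eq_one_div_card ν j₁ j₂ fun u => by
        simpa [Fin.forall_fin_two, sum_filter] using
          hindep 2 le_rfl ![j₁, j₂] (injective_pair_iff_ne.2 hj) ![u, u]
  rw [sum_mul_sum_sq_fiber_eq]
  simp only [hcollision, sum_sum_mul_mul_ite_eq, hp1]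
  ring

/-- Let `h : [n'] → [m]` be drawn from a pairwise independent hash family (any `k ≤ 2`
distinct inputs receive independent uniform values) and `p` a probability distribution on
`[n']`. Then `E_h[‖h(p)‖₂²] = 1/m + (1 − 1/m)‖p‖₂²`, where `h(p)ᵢ = ∑_{j : h(j)=i} pⱼ`. -/
theorem expectation_hashed_distribution_sq_norm (n' m : ℕ) (hm : 0 < m)
    (ν : (Fin n' → Fin m) → ℝ) (hν : ∀ h, 0 ≤ ν h) (hν1 : ∑ h, ν h = 1)
    (hindep : ∀ (k : ℕ), k ≤ 2 → ∀ (j : Fin k → Fin n'), Function.Injective j →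
      ∀ (u : Fin k → Fin m),
        (∑ h, if (∀ i, h (j i) = u i) then ν h else 0) = (1 / (m : ℝ)) ^ k)
    (p : Fin n' → ℝ) (hp : ∀ j, 0 ≤ p j) (hp1 : ∑ j, p j = 1) :
    ∑ h, ν h * (∑ i : Fin m, (∑ j ∈ Finset.univ.filter (fun j => h j = i), p j) ^ 2)
      = 1 / (m : ℝ) + (1 - 1 / (m : ℝ)) * ∑ j, (p j) ^ 2 :=
  expectation_hashed_distribution_sq_norm_general n' m ν hν1 hindep p hp1
end

section
/- Let p be a distribution on [n] with ||p||_2^2 = (1+α)/n for some α ≥ 0, and write p_i = 1/n + a_i. Then ||p||_3^3 − ||p||_2^4 ≤ (3/n)(α/n) + (α/n)^{3/2}. -/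
open Finset

/-! Write `p i = c + a i` with `c = 1/n`. Since `∑ a i = 0` and `n c = 1`, expanding gives
`‖p‖₃³ = c² + 3 c ‖a‖₂² + ∑ a i³` and `‖p‖₂² = c + ‖a‖₂² ≥ c`, so `‖p‖₂⁴ ≥ c²`. The remaining
cubic term is controlled by `a i ≤ ‖a‖₂`, whence `∑ a i³ ≤ ‖a‖₂ ∑ a i² = ‖a‖₂³`. -/

theorem sum_pow_three_le_sum_sq_rpow {ι : Type*} (s : Finset ι) (a : ι → ℝ) :
    ∑ i ∈ s, a i ^ 3 ≤ (∑ i ∈ s, a i ^ 2) ^ ((3 : ℝ) / 2) := by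
  set S := ∑ i ∈ s, a i ^ 2
  have hS : 0 ≤ S := sum_nonneg fun i _ => sq_nonneg (a i)
  have ha : ∀ i ∈ s, a i ≤ √S := fun i hi =>
    calc a i ≤ |a i| := le_abs_self _
      _ = √(a i ^ 2) := (Real.sqrt_sq_eq_abs _).symm
      _ ≤ √S := Real.sqrt_le_sqrt (single_le_sum (fun j _ => sq_nonneg (a j)) hi)
  calc ∑ i ∈ s, a i ^ 3 = ∑ i ∈ s, a i * a i ^ 2 := by simp only [← pow_succ']
    _ ≤ ∑ i ∈ s, √S * a i ^ 2 :=
        sum_le_sum fun i hi => mul_le_mul_of_nonneg_right (ha i hi) (sq_nonneg _)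
    _ = S ^ (1 : ℝ) * S ^ ((1 : ℝ) / 2) := by
        rw [← mul_sum, Real.rpow_one, Real.sqrt_eq_rpow, mul_comm]
    _ = S ^ ((3 : ℝ) / 2) := by rw [← Real.rpow_add' hS (by norm_num)]; norm_num

section Centering

variable {ι : Type*} [Fintype ι] {p : ι → ℝ}

theorem card_ne_zero_of_sum_eq_one (hp : ∑ i, p i = 1) : (Fintype.card ι : ℝ) ≠ 0 := by
  have : (univ : Finset ι).Nonempty := nonempty_of_sum_ne_zero (f := p) (by simp [hp])
  exact_mod_cast this.card_pos.ne'

theorem sum_sub_inv_card_eq_zero (hp : ∑ i, p i = 1) :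
    ∑ i, (p i - (Fintype.card ι : ℝ)⁻¹) = 0 := by
  simp [sum_sub_distrib, hp, card_ne_zero_of_sum_eq_one hp]

theorem sum_sq_sub_inv_card (hp : ∑ i, p i = 1) :
    ∑ i, (p i - (Fintype.card ι : ℝ)⁻¹) ^ 2 = ∑ i, p i ^ 2 - (Fintype.card ι : ℝ)⁻¹ := by
  have hN := card_ne_zero_of_sum_eq_one hp
  simp only [sub_sq, sum_add_distrib, sum_sub_distrib, ← sum_mul, ← mul_sum, hp, sum_const,
    card_univ, nsmul_eq_mul]
  field_simp
  ring

theorem sum_pow_three_eq_of_sum_eq_one (hp : ∑ i, p i = 1) :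
    ∑ i, p i ^ 3 = ∑ i, (p i - (Fintype.card ι : ℝ)⁻¹) ^ 3
      + 3 * (Fintype.card ι : ℝ)⁻¹ * ∑ i, (p i - (Fintype.card ι : ℝ)⁻¹) ^ 2
      + (Fintype.card ι : ℝ)⁻¹ ^ 2 := by
  set c := (Fintype.card ι : ℝ)⁻¹
  have hNc : (Fintype.card ι : ℝ) * c = 1 := mul_inv_cancel₀ (card_ne_zero_of_sum_eq_one hp)
  have hcentered : ∑ i, (p i - c) = 0 := sum_sub_inv_card_eq_zero hp
  have hexp : ∀ i, p i ^ 3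
      = (p i - c) ^ 3 + 3 * c * (p i - c) ^ 2 + 3 * c ^ 2 * (p i - c) + c ^ 3 := fun i => by ring
  simp only [hexp, sum_add_distrib, ← mul_sum, hcentered, sum_const, card_univ, nsmul_eq_mul]
  linear_combination c ^ 2 * hNc

theorem sum_pow_three_sub_sq_sum_sq_le (hp : ∑ i, p i = 1) :
    ∑ i, p i ^ 3 - (∑ i, p i ^ 2) ^ 2
      ≤ 3 * (Fintype.card ι : ℝ)⁻¹ * (∑ i, p i ^ 2 - (Fintype.card ι : ℝ)⁻¹)
        + (∑ i, p i ^ 2 - (Fintype.card ι : ℝ)⁻¹) ^ ((3 : ℝ) / 2) := by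
  set c := (Fintype.card ι : ℝ)⁻¹
  have hc : 0 ≤ c := by positivity
  have hA := sum_sq_sub_inv_card hp
  have hA0 : 0 ≤ ∑ i, p i ^ 2 - c := hA ▸ sum_nonneg fun i _ => sq_nonneg _
  have hcube := sum_pow_three_le_sum_sq_rpow univ fun i => p i - c
  rw [sum_pow_three_eq_of_sum_eq_one hp]
  rw [hA] at hcube ⊢
  nlinarith

end Centering

theorem third_moment_bound_general (n : ℕ) (α : ℝ)
    (p : Fin n → ℝ) (hp1 : ∑ i, p i = 1)
    (hl2 : ∑ i, (p i) ^ 2 = (1 + α) / n) :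
    (∑ i, (p i) ^ 3) - (∑ i, (p i) ^ 2) ^ 2
      ≤ (3 / (n : ℝ)) * (α / n) + (α / n) ^ ((3 : ℝ) / 2) := by
  have hn : (n : ℝ) ≠ 0 := by simpa using card_ne_zero_of_sum_eq_one hp1
  have hA : ∑ i, p i ^ 2 - (n : ℝ)⁻¹ = α / n := by rw [hl2]; field_simp; ring
  have h := sum_pow_three_sub_sq_sum_sq_le hp1
  rw [Fintype.card_fin, hA] at h
  rwa [div_eq_mul_inv 3]

/-- Let `p` be a distribution on `[n]` with `‖p‖₂² = (1+α)/n`, `α ≥ 0`. Then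
`‖p‖₃³ − ‖p‖₂⁴ ≤ (3/n)(α/n) + (α/n)^{3/2}`. -/
theorem third_moment_bound (n : ℕ) (hn : 0 < n) (α : ℝ) (hα : 0 ≤ α)
    (p : Fin n → ℝ) (hp : ∀ i, 0 ≤ p i) (hp1 : ∑ i, p i = 1)
    (hl2 : ∑ i, (p i) ^ 2 = (1 + α) / n) :
    (∑ i, (p i) ^ 3) - (∑ i, (p i) ^ 2) ^ 2
      ≤ (3 / (n : ℝ)) * (α / n) + (α / n) ^ ((3 : ℝ) / 2) :=
  third_moment_bound_general n α p hp1 hl2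
end

section
/- Let X_1,...,X_t be i.i.d. random variables taking values in [0, 30/N] with mean μ_0 ≤ 1/√n, let X = Σ X_ℓ with μ = E[X] ≤ t/√n. If a ≥ N/2, N > 4t/n^{0.49}, and N√n/(30t) > n^{1/200}, then Pr[X > a] ≤ exp(−α N a log n) for some universal constant α > 0. -/
/-!
Chernoff's exponential-moment method. By convexity of `exp`, a `[0, c]`-valued variable with
mean `m` satisfies `E[e^{lY}] ≤ exp (m (e^{lc} - 1) / c)`, and independence multiplies these
bounds. Choosing `l` with `e^{lc} = R := N√n / (2t) = 15 · N√n / (30t) > 15 n^{1/200}`, the mean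
term is at most `t R / (c √n) = N² / 60 ≤ N a / 30`, while `e^{-la}` contributes
`-(N a / 30) log R ≤ -(N a / 30) (1 + log n / 200)`; this leaves `α = 1 / 6000`.
-/

open MeasureTheory ProbabilityTheory Real

lemma exp_mul_le_one_add_mul_div_of_mem_Icc {c y : ℝ} (hc : 0 < c) (hy : y ∈ Set.Icc 0 c)
    (l : ℝ) : exp (l * y) ≤ 1 + y * (exp (l * c) - 1) / c := by
  have h := convexOn_exp.2 (Set.mem_univ 0) (Set.mem_univ (l * c))
    (sub_nonneg.2 ((div_le_one hc).2 hy.2)) (div_nonneg hy.1 hc.le) (sub_add_cancel 1 (y / c))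
  have hy' : y / c * (l * c) = l * y := by field_simp
  simp only [smul_eq_mul, mul_zero, zero_add, exp_zero, mul_one, hy'] at h
  calc exp (l * y) ≤ 1 - y / c + y / c * exp (l * c) := h
    _ = 1 + y * (exp (l * c) - 1) / c := by ring

section BoundedRandomVariables

variable {Ω : Type*} {mΩ : MeasurableSpace Ω} {μ : Measure Ω} [IsProbabilityMeasure μ]

lemma mgf_le_exp_integral_of_mem_Icc {Y : Ω → ℝ} {c : ℝ} (hY : AEMeasurable Y μ) (hc : 0 < c)
    (hb : ∀ᵐ ω ∂μ, Y ω ∈ Set.Icc 0 c) (l : ℝ) :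
    mgf Y μ l ≤ exp ((∫ ω, Y ω ∂μ) * (exp (l * c) - 1) / c) := by
  have hint : Integrable Y μ := .of_mem_Icc 0 c hY hb
  calc mgf Y μ l ≤ ∫ ω, (1 + Y ω * (exp (l * c) - 1) / c) ∂μ :=
        integral_mono_ae (integrable_exp_mul_of_mem_Icc hY hb)
          ((integrable_const 1).add ((hint.mul_const _).div_const c))
          (hb.mono fun ω hω => exp_mul_le_one_add_mul_div_of_mem_Icc hc hω l)
    _ = 1 + (∫ ω, Y ω ∂μ) * (exp (l * c) - 1) / c := by
        rw [integral_add (integrable_const 1) ((hint.mul_const _).div_const c),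
          integral_div, integral_mul_const]
        simp
    _ ≤ exp ((∫ ω, Y ω ∂μ) * (exp (l * c) - 1) / c) := by
        linarith [add_one_le_exp ((∫ ω, Y ω ∂μ) * (exp (l * c) - 1) / c)]

theorem measure_sum_ge_le_of_iIndepFun_of_mem_Icc {ι : Type*} [Fintype ι] {X : ι → Ω → ℝ}
    {c m l : ℝ} (h_indep : iIndepFun X μ) (h_meas : ∀ i, AEMeasurable (X i) μ) (hc : 0 < c)
    (hb : ∀ i, ∀ᵐ ω ∂μ, X i ω ∈ Set.Icc 0 c) (hm : ∀ i, ∫ ω, X i ω ∂μ ≤ m) (hl : 0 ≤ l)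
    (a : ℝ) :
    μ.real {ω | a ≤ ∑ i, X i ω} ≤
      exp (-l * a + Fintype.card ι * (m * (exp (l * c) - 1) / c)) := by
  have hsum_mem : ∀ᵐ ω ∂μ, (∑ i, X i) ω ∈ Set.Icc 0 (Fintype.card ι * c) := by
    filter_upwards [ae_all_iff.2 hb] with ω hω
    simp only [Finset.sum_apply]
    exact ⟨Finset.sum_nonneg fun i _ => (hω i).1,
      by simpa using Finset.sum_le_sum fun i (_ : i ∈ Finset.univ) => (hω i).2⟩
  have hmgf_le : ∀ i, mgf (X i) μ l ≤ exp (m * (exp (l * c) - 1) / c) := fun i =>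
    (mgf_le_exp_integral_of_mem_Icc (h_meas i) hc (hb i) l).trans <| exp_le_exp.2 <|
      div_le_div_of_nonneg_right (mul_le_mul_of_nonneg_right (hm i)
        (sub_nonneg.2 (one_le_exp (mul_nonneg hl hc.le)))) hc.le
  calc μ.real {ω | a ≤ ∑ i, X i ω} = μ.real {ω | a ≤ (∑ i, X i) ω} := by simp
    _ ≤ exp (-l * a) * mgf (∑ i, X i) μ l := measure_ge_le_exp_mul_mgf a hl
        (integrable_exp_mul_of_mem_Icc (Finset.aemeasurable_sum _ fun i _ => h_meas i) hsum_mem)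
    _ ≤ exp (-l * a) * ∏ _i : ι, exp (m * (exp (l * c) - 1) / c) := by
        rw [h_indep.mgf_sum₀ h_meas]
        gcongr with i
        exacts [fun i _ => mgf_nonneg, hmgf_le i]
    _ = exp (-l * a + Fintype.card ι * (m * (exp (l * c) - 1) / c)) := by
        rw [Finset.prod_const, Finset.card_univ, ← exp_nat_mul, ← exp_add]

end BoundedRandomVariables

lemma one_add_log_div_le_log_mul {n q : ℝ} (hn : 1 ≤ n) (hq : n ^ (1 / 200 : ℝ) < q) :
    1 + log n / 200 ≤ log (15 * q) := by
  have hlog15 : 1 ≤ log 15 := by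
    rw [le_log_iff_exp_le (by norm_num)]
    linarith [exp_one_lt_d9]
  have hpos : 0 < n ^ (1 / 200 : ℝ) := by positivity
  calc 1 + log n / 200 ≤ log 15 + log (n ^ (1 / 200 : ℝ)) := by
        rw [log_rpow (by positivity)]; linarith
    _ = log (15 * n ^ (1 / 200 : ℝ)) := (log_mul (by norm_num) hpos.ne').symm
    _ ≤ log (15 * q) := log_le_log (by positivity) (by linarith)

lemma chernoff_exponent_le {N a t n q : ℝ} (hN : 0 < N) (ha : N / 2 ≤ a) (ht : 0 < t)
    (hn : 1 ≤ n) (hq_eq : q = N * √n / (30 * t)) (hq : n ^ (1 / 200 : ℝ) < q) :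
    -(N / 30 * log (15 * q)) * a +
        t * (1 / √n * (exp (N / 30 * log (15 * q) * (30 / N)) - 1) / (30 / N))
      ≤ -(1 / 6000) * N * a * log n := by
  set R := 15 * q
  have hsn : 0 < √n := sqrt_pos.2 (by linarith)
  have hR : 0 < R := by simp only [R, hq_eq]; positivity
  have hexp : exp (N / 30 * log R * (30 / N)) = R := by
    rw [show N / 30 * log R * (30 / N) = log R by field_simp, exp_log hR]
  have hmean : t * (1 / √n * R / (30 / N)) = N ^ 2 / 60 := by
    simp only [R, hq_eq]; field_simp; ring
  have hlogR := one_add_log_div_le_log_mul hn hq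
  have ha0 : 0 < a := by linarith
  have hNa : 0 ≤ N * a / 30 := by positivity
  calc -(N / 30 * log R) * a + t * (1 / √n * (exp (N / 30 * log R * (30 / N)) - 1) / (30 / N))
      ≤ -(N / 30 * log R) * a + t * (1 / √n * R / (30 / N)) := by
        rw [hexp]; gcongr; linarith
    _ = -(N * a / 30) * log R + N ^ 2 / 60 := by rw [hmean]; ring
    _ ≤ -(N * a / 30) * (1 + log n / 200) + N * a / 30 := by
        have := mul_le_mul_of_nonneg_left hlogR hNa
        nlinarith
    _ = -(1 / 6000) * N * a * log n := by ring

/-- Chernoff tail bound used in the memory lower bound: there is a universal constant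
`α > 0` such that for any i.i.d. random variables `X₁, …, X_t` with values in `[0, 30/N]`
and mean at most `1/√n`, if `a ≥ N/2`, `N > 4t/n^{0.49}`, and `N√n/(30t) > n^{1/200}`,
then `Pr[∑ Xₗ > a] ≤ exp(−α N a log n)`. -/
theorem chernoff_tail_bound :
    ∃ α : ℝ, 0 < α ∧
      ∀ (Ω : Type) (mΩ : MeasurableSpace Ω) (μ : Measure Ω),
        IsProbabilityMeasure μ →
        ∀ (t n : ℕ) (N : ℝ) (X : Fin t → Ω → ℝ),
        iIndepFun X μ →
        (∀ i j, IdentDistrib (X i) (X j) μ μ) →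
        (∀ i, ∀ᵐ ω ∂μ, X i ω ∈ Set.Icc (0 : ℝ) (30 / N)) →
        (∀ i, (∫ ω, X i ω ∂μ) ≤ 1 / Real.sqrt n) →
        ∀ a : ℝ, N / 2 ≤ a →
          4 * t / (n : ℝ) ^ ((49 : ℝ) / 100) < N →
          (n : ℝ) ^ ((1 : ℝ) / 200) < N * Real.sqrt n / (30 * t) →
          (μ {ω | a < ∑ ℓ, X ℓ ω}).toReal ≤ Real.exp (-α * N * a * Real.log n) := by
  refine ⟨1 / 6000, by norm_num, ?_⟩
  intro Ω _ μ _ t n N X h_indep h_ident hb hm a ha hN_gt hq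
  have hN : 0 < N := lt_of_le_of_lt (by positivity) hN_gt
  have hq_pos : 0 < N * √n / (30 * t) := (by positivity : (0 : ℝ) ≤ _).trans_lt hq
  have ht : (0 : ℝ) < t := Nat.cast_pos.2 (Nat.pos_of_ne_zero fun h => by simp [h] at hq_pos)
  have hn : (1 : ℝ) ≤ n := Nat.one_le_cast.2 (Nat.pos_of_ne_zero fun h => by simp [h] at hq_pos)
  have hl : 0 ≤ N / 30 * log (15 * (N * √n / (30 * t))) :=
    mul_nonneg (by positivity)
      (log_nonneg (by linarith [one_le_rpow hn (by norm_num : (0 : ℝ) ≤ 1 / 200)]))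
  calc (μ {ω | a < ∑ ℓ, X ℓ ω}).toReal ≤ μ.real {ω | a ≤ ∑ ℓ, X ℓ ω} :=
        measureReal_mono (Set.ofPred_subset_ofPred.2 fun ω => le_of_lt)
    _ ≤ _ := measure_sum_ge_le_of_iIndepFun_of_mem_Icc h_indep
        (fun i => (h_ident i i).aemeasurable_fst) (by positivity) hb hm hl a
    _ ≤ exp (-(1 / 6000) * N * a * log n) := by
        rw [Fintype.card_fin]
        exact exp_le_exp.2 (chernoff_exponent_le hN ha ht hn rfl hq)
end
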